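/- Let ρ_{A₁A₁'⋯A_lA_l'} be a density operator on a tensor product of 2l finite-dimensional Hilbert systems A₁, A₁', …, A_l, A_l'. Then I(A₁A₁':⋯:A_lA_l')_ρ − I(A₁':⋯:A_l')_ρ = Σ_{i=1}^{l} I(Aᵢ ; A₁⋯A_{i−1} A'_{[l]∖{i}} | Aᵢ')_ρ, where A₁⋯A_{i−1} is empty when i = 1 and A'_{[l]∖{i}} denotes all of the primed systems A₁', …, A_l' except Aᵢ'. -/

import Mathlib

/-! Splitting each term as `I(Aᵢ ; A_{<i} A'_{≠i} | Aᵢ') = [H(AᵢAᵢ') − H(Aᵢ')] − [H(A_{≤i}A') − H(A_{<i}A')]`,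
the first brackets sum to the gap up to the correction `H(AA') − H(A')`, and the second brackets
telescope to exactly that correction (the chain rule for entropy along `A₁, …, A_l` given `A'`). -/

open scoped BigOperators ComplexOrder

noncomputable section

namespace QITPaper

/-- von Neumann entropy (natural logarithm); junk value `0` for non-Hermitian input. -/
def vnEntropy {n : Type} [Fintype n] [DecidableEq n] (ρ : Matrix n n ℂ) : ℝ :=
  if h : ρ.IsHermitian then -∑ i, h.eigenvalues i * Real.log (h.eigenvalues i) else 0

/-- A density operator: positive semidefinite with unit trace. -/
def IsDensity {n : Type} [Fintype n] (ρ : Matrix n n ℂ) : Prop :=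
  ρ.PosSemidef ∧ ρ.trace = 1

/-- Trace norm ‖A‖₁ = Tr √(AᴴA). -/
def traceNorm {n : Type} [Fintype n] [DecidableEq n] (A : Matrix n n ℂ) : ℝ :=
  ((Matrix.posSemidef_conjTranspose_mul_self A).1.eigenvectorUnitary.1 *
    Matrix.diagonal (((↑) : ℝ → ℂ) ∘ Real.sqrt ∘ (Matrix.posSemidef_conjTranspose_mul_self A).1.eigenvalues) *
    (star (Matrix.posSemidef_conjTranspose_mul_self A).1.eigenvectorUnitary : Matrix n n ℂ)).trace.re

/-- A pure state (rank-one projection onto a vector). -/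
def IsPure {n : Type} [Fintype n] (φ : Matrix n n ℂ) : Prop :=
  ∃ v : n → ℂ, φ = Matrix.of fun x y => v x * star (v y)

section Marginals

variable {ι : Type} [Fintype ι] [DecidableEq ι] {S : ι → Type}
  [∀ i, Fintype (S i)] [∀ i, DecidableEq (S i)]

/-- Combine an assignment on a finset `T` with one on its complement. -/
def mergeT (T : Finset ι) (x : ∀ i : T, S i) (z : ∀ i : {i : ι // i ∉ T}, S i) : ∀ i, S i :=
  fun i => if h : i ∈ T then x ⟨i, h⟩ else z ⟨i, h⟩

/-- Reduced density operator (partial trace onto the subsystems in `T`). -/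
def marg (ρ : Matrix (∀ i, S i) (∀ i, S i) ℂ) (T : Finset ι) :
    Matrix (∀ i : T, S i) (∀ i : T, S i) ℂ :=
  Matrix.of fun x y => ∑ z : ∀ i : {i : ι // i ∉ T}, S i, ρ (mergeT T x z) (mergeT T y z)

/-- Entropy of the reduced state on the subsystems in `T`. -/
def Hm (ρ : Matrix (∀ i, S i) (∀ i, S i) ℂ) (T : Finset ι) : ℝ :=
  vnEntropy (marg ρ T)

/-- Multipartite (mutual) information of the groups of subsystems `P j`. -/
def multiInfo {m : Type} [Fintype m] (ρ : Matrix (∀ i, S i) (∀ i, S i) ℂ)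
    (P : m → Finset ι) : ℝ :=
  (∑ j, Hm ρ (P j)) - Hm ρ (Finset.univ.biUnion P)

/-- Conditional quantum mutual information `I(a;b|c)`. -/
def cmi (ρ : Matrix (∀ i, S i) (∀ i, S i) ℂ) (a b c : Finset ι) : ℝ :=
  Hm ρ (a ∪ c) + Hm ρ (b ∪ c) - Hm ρ c - Hm ρ (a ∪ b ∪ c)

/-- Conditional multipartite information `I(P₁:⋯:P_m|E)`. -/
def condMultiInfo {m : Type} [Fintype m] (ρ : Matrix (∀ i, S i) (∀ i, S i) ℂ)
    (P : m → Finset ι) (E : Finset ι) : ℝ :=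
  (∑ j, (Hm ρ (P j ∪ E) - Hm ρ E)) - (Hm ρ (Finset.univ.biUnion P ∪ E) - Hm ρ E)

end Marginals

/-- Combine functions defined on the two summands of a sum type. -/
def combSum {α β : Type} {S : α ⊕ β → Type} (x : ∀ a, S (Sum.inl a)) (y : ∀ b, S (Sum.inr b)) :
    ∀ j, S j
  | Sum.inl a => x a
  | Sum.inr b => y b

instance sumElimFintype {α β : Type} (A : α → Type) (B : β → Type)
    [∀ a, Fintype (A a)] [∀ b, Fintype (B b)] : ∀ j : α ⊕ β, Fintype (Sum.elim A B j)
  | Sum.inl a => inferInstanceAs (Fintype (A a))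
  | Sum.inr b => inferInstanceAs (Fintype (B b))

instance sumElimDecEq {α β : Type} (A : α → Type) (B : β → Type)
    [∀ a, DecidableEq (A a)] [∀ b, DecidableEq (B b)] : ∀ j : α ⊕ β, DecidableEq (Sum.elim A B j)
  | Sum.inl a => inferInstanceAs (DecidableEq (A a))
  | Sum.inr b => inferInstanceAs (DecidableEq (B b))

section Paired

variable {l : ℕ} {S : Fin l ⊕ Fin l → Type} [∀ j, Fintype (S j)] [∀ j, DecidableEq (S j)]

/-- Regroup a state on `2l` systems into `l` pairs (unprimed, primed). -/
def pairEquiv (S : Fin l ⊕ Fin l → Type) :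
    (∀ j, S j) ≃ (∀ i : Fin l, S (Sum.inl i) × S (Sum.inr i)) where
  toFun f i := (f (Sum.inl i), f (Sum.inr i))
  invFun g := combSum (fun i => (g i).1) (fun i => (g i).2)
  left_inv f := funext fun j => by cases j <;> rfl
  right_inv g := rfl

/-- The multipartite information gap `I(A₁A₁':⋯:A_lA_l') − I(A₁':⋯:A_l')`. -/
def infoGap (ρ : Matrix (∀ j, S j) (∀ j, S j) ℂ) : ℝ :=
  multiInfo ρ (fun i : Fin l => ({Sum.inl i, Sum.inr i} : Finset (Fin l ⊕ Fin l)))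
    - multiInfo ρ (fun i : Fin l => ({Sum.inr i} : Finset (Fin l ⊕ Fin l)))

/-- Reduced state on the primed systems. -/
def margPrimed (ρ : Matrix (∀ j, S j) (∀ j, S j) ℂ) :
    Matrix (∀ i : Fin l, S (Sum.inr i)) (∀ i : Fin l, S (Sum.inr i)) ℂ :=
  Matrix.of fun x y => ∑ a : ∀ i : Fin l, S (Sum.inl i), ρ (combSum a x) (combSum a y)

/-- Reduced state on the unprimed systems. -/
def margUnprimed (ρ : Matrix (∀ j, S j) (∀ j, S j) ℂ) :
    Matrix (∀ i : Fin l, S (Sum.inl i)) (∀ i : Fin l, S (Sum.inl i)) ℂ :=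
  Matrix.of fun x y => ∑ b : ∀ i : Fin l, S (Sum.inr i), ρ (combSum x b) (combSum y b)

end Paired

/-- Choi matrix of a linear map on matrices. -/
def choiMatrix {n m : Type} [Fintype n] [DecidableEq n]
    (Φ : Matrix n n ℂ →ₗ[ℂ] Matrix m m ℂ) : Matrix (n × m) (n × m) ℂ :=
  Matrix.of fun p q => Φ (Matrix.single p.1 q.1 1) p.2 q.2

/-- A quantum channel: completely positive (positive semidefinite Choi matrix, by Choi's
theorem) and trace preserving. -/
def IsCPTP {n m : Type} [Fintype n] [DecidableEq n] [Fintype m]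
    (Φ : Matrix n n ℂ →ₗ[ℂ] Matrix m m ℂ) : Prop :=
  (choiMatrix Φ).PosSemidef ∧ ∀ ρ : Matrix n n ℂ, (Φ ρ).trace = ρ.trace

/-- Tensor product `Φ₁ ⊗ ⋯ ⊗ Φ_l` of maps acting on a product of systems. -/
def piMap {ι : Type} [Fintype ι] [DecidableEq ι] {B C : ι → Type} [∀ i, Fintype (B i)] [∀ i, DecidableEq (B i)]
    (Φ : ∀ i, Matrix (B i) (B i) ℂ → Matrix (C i) (C i) ℂ)
    (ρ : Matrix (∀ i, B i) (∀ i, B i) ℂ) : Matrix (∀ i, C i) (∀ i, C i) ℂ :=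
  Matrix.of fun x y => ∑ b : ∀ i, B i, ∑ b' : ∀ i, B i,
    ρ b b' * ∏ i, Φ i (Matrix.single (b i) (b' i) 1) (x i) (y i)

/-- Binary tensor product `Φ ⊗ Ψ` of maps. -/
def kronMap2 {a b c d : Type} [Fintype a] [DecidableEq a] [Fintype b] [DecidableEq b]
    (Φ : Matrix a a ℂ → Matrix c c ℂ) (Ψ : Matrix b b ℂ → Matrix d d ℂ)
    (ρ : Matrix (a × b) (a × b) ℂ) : Matrix (c × d) (c × d) ℂ :=
  Matrix.of fun x y => ∑ p : a, ∑ p' : a, ∑ q : b, ∑ q' : b,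
    ρ (p, q) (p', q') * Φ (Matrix.single p p' 1) x.1 y.1 *
      Ψ (Matrix.single q q' 1) x.2 y.2

/-- Kronecker (tensor) product of two square matrices. -/
def kron2 {a b : Type} (M : Matrix a a ℂ) (N : Matrix b b ℂ) :
    Matrix (a × b) (a × b) ℂ :=
  Matrix.of fun x y => M x.1 y.1 * N x.2 y.2

/-- Tensor product of a family of square matrices. -/
def kronPi {ι : Type} [Fintype ι] [DecidableEq ι] {A : ι → Type} (τ : ∀ i, Matrix (A i) (A i) ℂ) :
    Matrix (∀ i, A i) (∀ i, A i) ℂ :=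
  Matrix.of fun x y => ∏ i, τ i (x i) (y i)

/-- `n`-fold tensor power of a square matrix. -/
def tensorPow {t : Type} (φ : Matrix t t ℂ) (n : ℕ) : Matrix (Fin n → t) (Fin n → t) ℂ :=
  Matrix.of fun x y => ∏ m, φ (x m) (y m)

/-- Partial trace over the first tensor factor. -/
def ptraceFst {a b : Type} [Fintype a] (σ : Matrix (a × b) (a × b) ℂ) : Matrix b b ℂ :=
  Matrix.of fun x y => ∑ k, σ (k, x) (k, y)

/-- Marginal on the first tensor factor. -/
def margFst {a b : Type} [Fintype b] (ρ : Matrix (a × b) (a × b) ℂ) : Matrix a a ℂ :=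
  Matrix.of fun x y => ∑ k, ρ (x, k) (y, k)

/-- Marginal on the second tensor factor. -/
def margSnd {a b : Type} [Fintype a] (ρ : Matrix (a × b) (a × b) ℂ) : Matrix b b ℂ :=
  Matrix.of fun x y => ∑ k, ρ (k, x) (k, y)

/-- A POVM: positive semidefinite operators summing to the identity. -/
def IsPOVM {A X : Type} [Fintype A] [DecidableEq A] [Fintype X]
    (Λ : X → Matrix A A ℂ) : Prop :=
  (∀ x, (Λ x).PosSemidef) ∧ ∑ x, Λ x = 1

/-- Measurement map `σ ↦ ∑ₓ Tr[Λₓ σ] |x⟩⟨x|`. -/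
def measChan {A X : Type} [Fintype A] [Fintype X] [DecidableEq X]
    (Λ : X → Matrix A A ℂ) (σ : Matrix A A ℂ) : Matrix X X ℂ :=
  Matrix.of fun x y => if x = y then (Λ x * σ).trace else 0

/-- Entanglement-breaking channel: a measurement map followed by a preparation,
equivalently a channel of Holevo form. -/
def IsEB {A : Type} [Fintype A] [DecidableEq A] (Φ : Matrix A A ℂ →ₗ[ℂ] Matrix A A ℂ) : Prop :=
  ∃ (k : ℕ) (Λ : Fin k → Matrix A A ℂ) (σ : Fin k → Matrix A A ℂ),
    IsPOVM Λ ∧ (∀ x, IsDensity (σ x)) ∧ ∀ ρ, Φ ρ = ∑ x, (Λ x * ρ).trace • σ x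

/-- The multipartite symmetric quantum (MSQ) discord. -/
def msqDiscord {l : ℕ} {A : Fin l → Type} [∀ i, Fintype (A i)] [∀ i, DecidableEq (A i)]
    (ρ : Matrix (∀ i, A i) (∀ i, A i) ℂ) : ℝ :=
  multiInfo ρ (fun i : Fin l => ({i} : Finset (Fin l))) -
    sSup { r : ℝ | ∃ (k : Fin l → ℕ) (Λ : ∀ i, Fin (k i) → Matrix (A i) (A i) ℂ),
      (∀ i, IsPOVM (Λ i)) ∧
      r = multiInfo (piMap (fun i => measChan (Λ i)) ρ) (fun i : Fin l => ({i} : Finset (Fin l))) }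

/-- Binary entropy function (natural logarithm). -/
def binEntropy (x : ℝ) : ℝ := -(x * Real.log x) - (1 - x) * Real.log (1 - x)

/-- A fully separable multipartite state. -/
def IsFullySeparable {l : ℕ} {A : Fin l → Type} [∀ i, Fintype (A i)]
    (σ : Matrix (∀ i, A i) (∀ i, A i) ℂ) : Prop :=
  ∃ (k : ℕ) (p : Fin k → ℝ) (τ : Fin k → ∀ i, Matrix (A i) (A i) ℂ),
    (∀ z, 0 ≤ p z) ∧ ∑ z, p z = 1 ∧ (∀ z i, IsDensity (τ z i)) ∧
    σ = ∑ z, (p z : ℂ) • kronPi (τ z)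

/-- Trace distance from `ρ` to the set of fully separable states. -/
def sepDist {l : ℕ} {A : Fin l → Type} [∀ i, Fintype (A i)] [∀ i, DecidableEq (A i)]
    (ρ : Matrix (∀ i, A i) (∀ i, A i) ℂ) : ℝ :=
  sInf { r : ℝ | ∃ σ, IsFullySeparable σ ∧ r = traceNorm (ρ - σ) }

/-- The conditional entanglement of multipartite information (CEMI). -/
def CEMI {l : ℕ} {A : Fin l → Type} [∀ i, Fintype (A i)] [∀ i, DecidableEq (A i)]
    (ρ : Matrix (∀ i, A i) (∀ i, A i) ℂ) : ℝ :=
  (1/2) * sInf { r : ℝ | ∃ (D : Fin l → ℕ)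
    (σ : Matrix (∀ j : Fin l ⊕ Fin l, Sum.elim A (fun i => Fin (D i)) j)
               (∀ j : Fin l ⊕ Fin l, Sum.elim A (fun i => Fin (D i)) j) ℂ),
    IsDensity σ ∧
    (∀ x y : ∀ i, A i, ρ x y = ∑ z : ∀ i : Fin l, Fin (D i), σ (combSum x z) (combSum y z)) ∧
    r = infoGap σ }

/-- The multipartite squashed entanglement. -/
def Esq {l : ℕ} {A : Fin l → Type} [∀ i, Fintype (A i)] [∀ i, DecidableEq (A i)]
    (ρ : Matrix (∀ i, A i) (∀ i, A i) ℂ) : ℝ :=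
  (1/2) * sInf { r : ℝ | ∃ (d : ℕ)
    (σ : Matrix (∀ j : Fin l ⊕ Unit, Sum.elim A (fun _ => Fin d) j)
               (∀ j : Fin l ⊕ Unit, Sum.elim A (fun _ => Fin d) j) ℂ),
    IsDensity σ ∧
    (∀ x y : ∀ i, A i, ρ x y = ∑ z : ∀ _ : Unit, Fin d, σ (combSum x z) (combSum y z)) ∧
    r = condMultiInfo σ (fun i : Fin l => ({Sum.inl i} : Finset (Fin l ⊕ Unit)))
          ({Sum.inr ()} : Finset (Fin l ⊕ Unit)) }

open Finset

section ChainRule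

variable {l : ℕ} {S : Fin l ⊕ Fin l → Type} [∀ j, Fintype (S j)] [∀ j, DecidableEq (S j)]

/-- The systems `A₁ ⋯ A_k` together with all primed systems `A₁' ⋯ A_l'`. -/
def prefixWithPrimed (l k : ℕ) : Finset (Fin l ⊕ Fin l) :=
  (univ.filter fun j : Fin l => (j : ℕ) < k).image Sum.inl ∪ univ.image Sum.inr

theorem prefixWithPrimed_zero : prefixWithPrimed l 0 = univ.image Sum.inr := by
  simp [prefixWithPrimed]

theorem prefixWithPrimed_self : prefixWithPrimed l l = univ := by
  ext (j | j) <;> simp [prefixWithPrimed]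

theorem biUnion_pairs_eq_univ :
    univ.biUnion (fun i : Fin l => ({Sum.inl i, Sum.inr i} : Finset (Fin l ⊕ Fin l))) = univ := by
  ext (j | j) <;> simp

theorem biUnion_primed_eq_image_inr :
    univ.biUnion (fun i : Fin l => ({Sum.inr i} : Finset (Fin l ⊕ Fin l))) = univ.image Sum.inr := by
  ext (j | j) <;> simp

theorem infoGap_eq_sum_sub (ρ : Matrix (∀ j, S j) (∀ j, S j) ℂ) :
    infoGap ρ = ∑ i : Fin l, (Hm ρ {Sum.inl i, Sum.inr i} - Hm ρ {Sum.inr i})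
      - (Hm ρ univ - Hm ρ (univ.image Sum.inr)) := by
  rw [infoGap, multiInfo, multiInfo, biUnion_pairs_eq_univ, biUnion_primed_eq_image_inr,
    sum_sub_distrib]
  ring

theorem Hm_univ_sub_Hm_primed_eq_sum (ρ : Matrix (∀ j, S j) (∀ j, S j) ℂ) :
    Hm ρ univ - Hm ρ (univ.image Sum.inr) =
      ∑ i : Fin l, (Hm ρ (prefixWithPrimed l (i + 1)) - Hm ρ (prefixWithPrimed l i)) := by
  rw [Fin.sum_univ_eq_sum_range (fun k => Hm ρ (prefixWithPrimed l (k + 1))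
      - Hm ρ (prefixWithPrimed l k)), sum_range_sub (fun k => Hm ρ (prefixWithPrimed l k)),
    prefixWithPrimed_self, prefixWithPrimed_zero]

theorem cmi_eq_sub_entropy_increment (ρ : Matrix (∀ j, S j) (∀ j, S j) ℂ) (i : Fin l) :
    cmi ρ {Sum.inl i}
        ((univ.filter (fun j : Fin l => j < i)).image Sum.inl ∪
          (univ.filter (fun j : Fin l => j ≠ i)).image Sum.inr)
        {Sum.inr i} =
      (Hm ρ {Sum.inl i, Sum.inr i} - Hm ρ {Sum.inr i})
        - (Hm ρ (prefixWithPrimed l (i + 1)) - Hm ρ (prefixWithPrimed l i)) := by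
  have h_pair : ({Sum.inl i} : Finset (Fin l ⊕ Fin l)) ∪ {Sum.inr i} = {Sum.inl i, Sum.inr i} :=
    rfl
  have h_before : (univ.filter (fun j : Fin l => j < i)).image Sum.inl ∪
      (univ.filter (fun j : Fin l => j ≠ i)).image Sum.inr ∪ {Sum.inr i} =
        prefixWithPrimed l i := by
    ext (j | j)
    · simp [prefixWithPrimed]
    · simp [prefixWithPrimed, em]
  have h_upto : {Sum.inl i} ∪ ((univ.filter (fun j : Fin l => j < i)).image Sum.inl ∪
      (univ.filter (fun j : Fin l => j ≠ i)).image Sum.inr) ∪ {Sum.inr i} =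
        prefixWithPrimed l (i + 1) := by
    ext (j | j)
    · simp [prefixWithPrimed, ← le_iff_eq_or_lt]
    · simp [prefixWithPrimed, em]
  rw [cmi, h_pair, h_before, h_upto]
  ring

end ChainRule

theorem infoGap_eq_sum_cmi_general
    (l : ℕ) (S : Fin l ⊕ Fin l → Type) [∀ j, Fintype (S j)] [∀ j, DecidableEq (S j)]
    (ρ : Matrix (∀ j, S j) (∀ j, S j) ℂ) :
    infoGap ρ =
      ∑ i : Fin l,
        cmi ρ {Sum.inl i}
          ((Finset.univ.filter (fun j : Fin l => j < i)).image Sum.inl ∪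
            (Finset.univ.filter (fun j : Fin l => j ≠ i)).image Sum.inr)
          {Sum.inr i} := by
  rw [infoGap_eq_sum_sub, Hm_univ_sub_Hm_primed_eq_sum, ← sum_sub_distrib]
  exact sum_congr rfl fun i _ => (cmi_eq_sub_entropy_increment ρ i).symm

/-- chain-rule expansion of the multipartite information gap. -/
theorem infoGap_eq_sum_cmi
    (l : ℕ) (S : Fin l ⊕ Fin l → Type) [∀ j, Fintype (S j)] [∀ j, DecidableEq (S j)]
    (ρ : Matrix (∀ j, S j) (∀ j, S j) ℂ) (hρ : IsDensity ρ) :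
    infoGap ρ =
      ∑ i : Fin l,
        cmi ρ {Sum.inl i}
          ((Finset.univ.filter (fun j : Fin l => j < i)).image Sum.inl ∪
            (Finset.univ.filter (fun j : Fin l => j ≠ i)).image Sum.inr)
          {Sum.inr i} :=
  infoGap_eq_sum_cmi_general l S ρ

end QITPaper
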